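/- Let g be a Lie triple system over a field F with char F ≠ 2, 3 and N : g → g a Nijenhuis operator. Then for every integer k > 0 and all x1,x2,x3 ∈ g one has [x1,x2,x3]_{N^{k+1}} = ([·,·,·]_{N^k})_N(x1,x2,x3), where for a linear map M and a trilinear map b one sets b_M(x,y,z) := b(Mx,y,z) + b(x,My,z) + b(x,y,Mz) − M(b(x,y,z)), [·,·,·]_M denotes this construction applied to the bracket of g, and ([·,·,·]_{N^k})_N denotes the construction applied with the map N to the trilinear map [·,·,·]_{N^k}. -/

import Mathlib

/-- `N` is a Nijenhuis operator for the Lie triple system bracket `t`. -/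
def IsNijenhuis {F : Type*} [Field F] {g : Type*} [AddCommGroup g] [Module F g]
    (t : g →ₗ[F] g →ₗ[F] g →ₗ[F] g) (N : Module.End F g) : Prop :=
  (∀ x y z : g, t (N x) (N y) (N z) = 0) ∧
  (∀ x y z : g,
    N (N (t x y z)) =
      N (t (N x) y z) + N (t x (N y) z) + N (t x y (N z)) -
        t (N x) (N y) z - t (N x) y (N z) - t x (N y) (N z))

/-- The deformed trilinear map `b_M(x,y,z) = b(Mx,y,z)+b(x,My,z)+b(x,y,Mz)−M(b(x,y,z))`. -/
def deform {g : Type*} [AddCommGroup g] (b : g → g → g → g) (M : g → g) :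
    g → g → g → g :=
  fun x y z => b (M x) y z + b x (M y) z + b x y (M z) - M (b x y z)

/-! The defect `(b_M)_P - b_{M ∘ P}` is a symmetric expression in `M` and `P`, the trilinear
analogue of the Nijenhuis concomitant; for `M = P = N` it is twice the defect of (N2). So the
theorem says that the concomitant of `N ^ k` and `N` vanishes. Evaluating (N2) at `N ^ k x`,
`N ^ k y` and `N ^ k z` and discarding the terms `[N ^ k ·, N ·, N ·]` killed by (N1) shows that the
concomitant of `N ^ (k + 1)` and `N` is `N` applied to that of `N ^ k` and `N`. -/

def nijenhuisConcomitant {g : Type*} [AddCommGroup g] (b : g → g → g → g) (M P : g → g) :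
    g → g → g → g :=
  fun x y z =>
    b (P x) (M y) z + b (M x) (P y) z + b (P x) y (M z) + b (M x) y (P z) +
      b x (P y) (M z) + b x (M y) (P z) -
      M (b (P x) y z) - M (b x (P y) z) - M (b x y (P z)) -
      P (b (M x) y z) - P (b x (M y) z) - P (b x y (M z)) +
      M (P (b x y z)) + P (M (b x y z))

theorem deform_deform {g G : Type*} [AddCommGroup g] [FunLike G g g] [AddMonoidHomClass G g g]
    (b : g → g → g → g) (M : g → g) (P : G) (x y z : g) :
    deform (deform b M) P x y z = deform b (M ∘ P) x y z + nijenhuisConcomitant b M P x y z := by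
  simp only [deform, nijenhuisConcomitant, Function.comp_apply, map_add, map_sub]
  abel

namespace IsNijenhuis

variable {F g : Type*} [Field F] [AddCommGroup g] [Module F g]
  {t : g →ₗ[F] g →ₗ[F] g →ₗ[F] g} {N : Module.End F g}

theorem nijenhuisConcomitant_self (hN : IsNijenhuis t N) (x y z : g) :
    nijenhuisConcomitant (fun x y z => t x y z) N N x y z = 0 := by
  simp only [nijenhuisConcomitant]
  linear_combination (norm := abel) hN.2 x y z + hN.2 x y z

theorem nijenhuisConcomitant_pow_succ (hN : IsNijenhuis t N) {k : ℕ} (hk : 0 < k) (x y z : g) :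
    nijenhuisConcomitant (fun x y z => t x y z) ⇑(N ^ (k + 1)) N x y z =
      N (nijenhuisConcomitant (fun x y z => t x y z) ⇑(N ^ k) N x y z) := by
  obtain ⟨m, rfl⟩ := Nat.exists_eq_add_of_lt hk
  have comm (v : g) : N ((N ^ m) v) = (N ^ m) (N v) :=
    LinearMap.congr_fun (Commute.self_pow N m).eq v
  have hx := hN.2 ((N ^ (m + 1)) x) y z
  have hy := hN.2 x ((N ^ (m + 1)) y) z
  have hz := hN.2 x y ((N ^ (m + 1)) z)
  have hx₀ := hN.1 ((N ^ m) x) y z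
  have hy₀ := hN.1 x ((N ^ m) y) z
  have hz₀ := hN.1 x y ((N ^ m) z)
  simp only [nijenhuisConcomitant, zero_add, pow_succ, Module.End.mul_apply,
    map_add, map_sub, comm] at hx hy hz hx₀ hy₀ hz₀ ⊢
  linear_combination (norm := abel) hx + hy + hz - hx₀ - hy₀ - hz₀

theorem nijenhuisConcomitant_pow_eq_zero (hN : IsNijenhuis t N) {k : ℕ} (hk : 0 < k)
    (x y z : g) : nijenhuisConcomitant (fun x y z => t x y z) ⇑(N ^ k) N x y z = 0 := by
  induction k, hk using Nat.le_induction generalizing x y z with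
  | base => simpa using hN.nijenhuisConcomitant_self x y z
  | succ k hk ih => rw [hN.nijenhuisConcomitant_pow_succ hk, ih, map_zero]

end IsNijenhuis

theorem deform_pow_succ_general {F : Type*} [Field F]
    {g : Type*} [AddCommGroup g] [Module F g]
    (t : g →ₗ[F] g →ₗ[F] g →ₗ[F] g)
    (N : Module.End F g) (hN : IsNijenhuis t N) :
    ∀ k : ℕ, 0 < k → ∀ x1 x2 x3 : g,
      deform (fun x y z => t x y z) (⇑(N ^ (k + 1))) x1 x2 x3 =
        deform (deform (fun x y z => t x y z) (⇑(N ^ k))) (⇑N) x1 x2 x3 := by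
  intro k hk x1 x2 x3
  rw [deform_deform, hN.nijenhuisConcomitant_pow_eq_zero hk, add_zero, pow_succ,
    Module.End.coe_mul]

theorem deform_pow_succ {F : Type*} [Field F]
    (hchar2 : (2 : F) ≠ 0) (hchar3 : (3 : F) ≠ 0)
    {g : Type*} [AddCommGroup g] [Module F g]
    (t : g →ₗ[F] g →ₗ[F] g →ₗ[F] g)
    (hskew : ∀ x y : g, t x x y = 0)
    (hjac : ∀ x y z : g, t x y z + t y z x + t z x y = 0)
    (hfund : ∀ x y a b c : g,
      t x y (t a b c) = t (t x y a) b c + t a (t x y b) c + t a b (t x y c))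
    (N : Module.End F g) (hN : IsNijenhuis t N) :
    ∀ k : ℕ, 0 < k → ∀ x1 x2 x3 : g,
      deform (fun x y z => t x y z) (⇑(N ^ (k + 1))) x1 x2 x3 =
        deform (deform (fun x y z => t x y z) (⇑(N ^ k))) (⇑N) x1 x2 x3 :=
  deform_pow_succ_general t N hN
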